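/- Let U be a finite set of size n, 𝒞 = {C_1,...,C_m} a covering of U with matrix representation M_𝒞, and define the ⊙ product by (A ⊙ B)_{ij} = ⋀_k (B_{kj} − A_{ik} + 1) for Boolean matrices A (n×m) and B (m×p), computed over the integers with the convention that the result's (i,j) entry is 1 iff for every k, A_{ik} ≤ B_{kj}. Then the (i,j) entry of M_𝒞 ⊙ M_𝒞^T equals 1 if and only if x_j ∈ N(x_i), where N(x) = ⋂{K ∈ 𝒞 : x ∈ K}. -/

import Mathlib

theorem ite_one_zero_le_ite_one_zero_iff {α : Type*} [Zero α] [One α] [PartialOrder α]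
    [ZeroLEOneClass α] [NeZero (1 : α)] {p q : Prop} [Decidable p] [Decidable q] :
    (if p then (1 : α) else 0) ≤ (if q then 1 else 0) ↔ (p → q) := by
  by_cases hp : p <;> by_cases hq : q <;> simp [hp, hq, zero_lt_one.not_ge]

theorem stmt_11_general (n m : ℕ) (C : Fin m → Finset (Fin n))
    (M : Fin n → Fin m → ℤ)
    (hM : ∀ i k, M i k = if i ∈ C k then 1 else 0)
    (c : Fin n → Fin n → ℤ)
    (hc : ∀ i j, c i j = 1 ↔ ∀ k, M i k ≤ M j k) :
    ∀ i j, c i j = 1 ↔ ∀ k, i ∈ C k → j ∈ C k := by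
  intro i j
  simp only [hc, hM, ite_one_zero_le_ite_one_zero_iff]

theorem stmt_11 (n m : ℕ) (C : Fin m → Finset (Fin n))
    (hne : ∀ k, (C k).Nonempty) (hcov : ∀ i : Fin n, ∃ k, i ∈ C k)
    (M : Fin n → Fin m → ℤ)
    (hM : ∀ i k, M i k = if i ∈ C k then 1 else 0)
    (c : Fin n → Fin n → ℤ)
    (hc : ∀ i j, c i j = 1 ↔ ∀ k, M i k ≤ M j k) :
    ∀ i j, c i j = 1 ↔ ∀ k, i ∈ C k → j ∈ C k :=
  stmt_11_general n m C M hM c hc
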